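/- arXiv:1503.02037 — 2 statements merged into one kernel-verified Lean document; each statement's English description precedes it below -/
import Mathlib

section
/- Let τ ∈ {0,1}^n have exactly k ones and let Y be the Young diagram of shape λ(τ) inside the k×(n−k) rectangle. Then there exists a weight-preserving bijection between the set of Catalan paths of size (n,k) constrained by Y and the set of Catalan alternative tableaux of size (n,k) of type τ; in particular, Σ_C wt(C) = Σ_T wt(T), where C ranges over Catalan paths constrained by Y and T ranges over Catalan alternative tableaux of type τ. -/
/-!
A Catalan tableau is determined by its `β`'s. Record for each row one more than the column of
its `β` (`0` if there is none); call a box open if it lies strictly right of the `β` of its row.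
The resulting vector `v` satisfies `v i ≤ λ i`, and no `β` lies above an open box; conversely
every such β-vector comes from exactly one tableau, whose `α`'s are forced into the lowest open
box of each column. Sorting `v` into nonincreasing order gives a Catalan path, and every path
is the sort of exactly one β-vector: among the rearrangements of the path lying below `λ`, one
maximising `∑ (i + 1) v i` is a β-vector, and a β-vector is recovered from its multiset of
values row by row from the bottom. Along this correspondence the `β`-free rows are the rows
with `v i = 0`, i.e. the south steps on the west border, and the `α`-free columns are the
columns without open boxes, i.e. those where the path runs along the boundary of `λ`.
-/

open Finset

/-- Number of 1's in the word `τ ∈ {0,1}^n` (encoded as `τ : Fin n → Bool`). -/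
def onesCount {n : ℕ} (τ : Fin n → Bool) : ℕ :=
  (univ.filter fun p : Fin n => τ p = true).card

/-- `lambdaOf τ i` is the number of 0's of `τ` following the `i`-th 1 of `τ`
(`i` is 1-based): a 0 at position `p` follows the `i`-th 1 iff at least `i`
ones of `τ` occur strictly before `p`.  For `i` larger than the number of ones
this is `0`, which gives the convention `λ_{k+1} = 0` for free. -/
def lambdaOf {n : ℕ} (τ : Fin n → Bool) (i : ℕ) : ℕ :=
  (univ.filter fun p : Fin n => τ p = false ∧
    i ≤ (univ.filter fun q : Fin n => q < p ∧ τ q = true).card).card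

/-- A filling of the Young diagram with row lengths `lam` (rows indexed top to
bottom by `Fin k`, columns left to right by `Fin m`, the diagram being
northwest-justified inside the `k × m` rectangle) with `α`'s (`some true`) and
`β`'s (`some false`), empty boxes being `none`, which makes it a Catalan
alternative tableau:
(o) all symbols lie in boxes of the diagram;
(i) every box above an `α` (same column, smaller row index) is empty;
(ii) every box left of a `β` (same row, smaller column index) is empty;
(iii) every box of the diagram which neither lies above an `α` nor left of a
`β` contains a symbol. -/
def IsCatalanFilling {k m : ℕ} (lam : Fin k → ℕ) (f : Fin k → Fin m → Option Bool) : Prop :=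
  (∀ (i : Fin k) (j : Fin m), f i j ≠ none → (j : ℕ) < lam i) ∧
  (∀ (i : Fin k) (j : Fin m), f i j = some true → ∀ i' : Fin k, i' < i → f i' j = none) ∧
  (∀ (i : Fin k) (j : Fin m), f i j = some false → ∀ j' : Fin m, j' < j → f i j' = none) ∧
  (∀ (i : Fin k) (j : Fin m), (j : ℕ) < lam i → f i j = none →
    (∃ i', i < i' ∧ f i' j = some true) ∨ (∃ j', j < j' ∧ f i j' = some false))

set_option synthInstance.maxSize 2000 in
set_option synthInstance.maxHeartbeats 1000000 in
instance {k m : ℕ} (lam : Fin k → ℕ) (f : Fin k → Fin m → Option Bool) :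
    Decidable (IsCatalanFilling lam f) := by
  unfold IsCatalanFilling; infer_instance

/-- The weight `(αβ)^n (1/α)^{fcol(T)} (1/β)^{frow(T)}` of a Catalan alternative
tableau of size `(n,k)`, where `fcol` is the number of `α`-free columns and
`frow` the number of `β`-free rows of the `k × (n-k)` rectangle. -/
noncomputable def tabWeight (a b : ℝ) (n : ℕ) {k m : ℕ}
    (f : Fin k → Fin m → Option Bool) : ℝ :=
  (a * b) ^ n * a⁻¹ ^ (univ.filter fun j : Fin m => ∀ i : Fin k, f i j ≠ some true).card
    * b⁻¹ ^ (univ.filter fun i : Fin k => ∀ j : Fin m, f i j ≠ some false).card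

/-- Extension of a finite sequence `g = (g_1, …, g_k)` (indexed here by `Fin k`)
to all of `ℕ` (1-based), with the conventions `g_0 = n - k` and `g_t = 0` for
`t > k`. -/
def extSeq (n k : ℕ) (g : Fin k → ℕ) : ℕ → ℕ := fun t =>
  if t = 0 then n - k else if h : 1 ≤ t ∧ t ≤ k then g ⟨t - 1, by omega⟩ else 0

/-- The path weight `pwt(C)` of the Catalan path of size `(n,k)` constrained by
the Young diagram of shape `lam`, encoded by `C = (C_1, …, C_k)` where `C_i`
(a vertical line of the rectangle, labelled `0, …, n-k` from the left) is the
position of the unique south step of the path in row `i`:  the product, over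
all edges of the path, of the weight of the edge, where the south edge in row
`i` has weight `1/β` if it lies on the (west) border of the rectangle
(`C_i = 0`) and `1` otherwise, and a west edge lying on the south boundary of
the Young diagram has weight `1/α` and `1` otherwise.  The west edges of the
path along the horizontal line `y = i` (`i = 0, …, k`, counted from the top)
run over `x ∈ [C_{i+1}, C_i)` with the conventions `C_0 = n-k`, `C_{k+1} = 0`,
and such an edge lies on the south boundary of the diagram exactly when
`λ_{i+1} ≤ x < λ_i`, with `λ_0 = n-k` and `λ_{k+1} = 0`. -/
noncomputable def pwt (a b : ℝ) (n k : ℕ) (lam C : Fin k → ℕ) : ℝ :=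
  (∏ i : Fin k, if C i = 0 then b⁻¹ else 1) *
    ∏ i ∈ range (k + 1), ∏ x ∈ Ico (extSeq n k C (i + 1)) (extSeq n k C i),
      if extSeq n k lam (i + 1) ≤ x ∧ x < extSeq n k lam i then a⁻¹ else 1

/-- The total weight of a Catalan path, `wt(C) = (αβ)^n pwt(C)`. -/
noncomputable def pathWt (a b : ℝ) (n k : ℕ) (lam C : Fin k → ℕ) : ℝ :=
  (a * b) ^ n * pwt a b n k lam C

/-- `C = (C_1, …, C_k)` encodes a lattice path (south and west steps, from the
northeast to the southwest corner of the `k × (n-k)` rectangle) constrained by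
the Young diagram of shape `lam`, i.e. `λ_i ≥ C_i ≥ C_{i+1} ≥ 0`. -/
def IsCatalanPath {k : ℕ} (lam C : Fin k → ℕ) : Prop :=
  (∀ i, C i ≤ lam i) ∧ ∀ i j : Fin k, i ≤ j → C j ≤ C i

lemma lambdaOf_antitone {n : ℕ} (τ : Fin n → Bool) : Antitone (lambdaOf τ) :=
  fun _ _ hij => card_le_card fun p hp => by
    simp only [mem_filter, mem_univ, true_and] at hp ⊢
    exact ⟨hp.1, hij.trans hp.2⟩

lemma lambdaOf_le_sub_onesCount {n : ℕ} (τ : Fin n → Bool) (i : ℕ) :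
    lambdaOf τ i ≤ n - onesCount τ := by
  have hzeros : lambdaOf τ i ≤ #{p | τ p = false} :=
    card_le_card fun p hp => by
      simp only [mem_filter, mem_univ, true_and] at hp ⊢
      exact hp.1
  have hsplit : #{p | τ p = false} + onesCount τ = n := by
    simpa [onesCount, add_comm] using
      card_filter_add_card_filter_not (s := univ) (fun p => τ p = true)
  omega

section BetaVector

variable {k m : ℕ} {lam : Fin k → ℕ}

/-- Box `(i, j)` of the diagram of shape `lam` lies neither at nor left of the `β` of row `i`,
whose column is `v i - 1` (`v i = 0` when row `i` has no `β`). -/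
def OpenBox (lam v : Fin k → ℕ) (i : Fin k) (j : ℕ) : Prop := v i ≤ j ∧ j < lam i

instance (lam v : Fin k → ℕ) (i : Fin k) (j : ℕ) : Decidable (OpenBox lam v i j) :=
  inferInstanceAs (Decidable (_ ∧ _))

/-- The second condition says that no `β` lies above an open box. -/
def IsBetaVector (lam v : Fin k → ℕ) : Prop :=
  (∀ i, v i ≤ lam i) ∧ ∀ i i' : Fin k, i < i' → v i ≤ v i' ∨ lam i' < v i

def fillingOfBeta (lam v : Fin k → ℕ) : Fin k → Fin m → Option Bool := fun i j =>
  if (j : ℕ) + 1 = v i then some false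
  else if OpenBox lam v i j ∧ ∀ i', i < i' → ¬ OpenBox lam v i' j then some true
  else none

lemma fillingOfBeta_eq_some_false_iff {v : Fin k → ℕ} {i : Fin k} {j : Fin m} :
    fillingOfBeta lam v i j = some false ↔ (j : ℕ) + 1 = v i := by
  unfold fillingOfBeta
  split_ifs with h1 h2 <;> simp [h1]

lemma fillingOfBeta_eq_some_true_iff {v : Fin k → ℕ} {i : Fin k} {j : Fin m} :
    fillingOfBeta lam v i j = some true ↔
      OpenBox lam v i j ∧ ∀ i', i < i' → ¬ OpenBox lam v i' j := by
  unfold fillingOfBeta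
  split_ifs with h1 h2
  · exact iff_of_false (by simp) fun h => by have := h.1.1; omega
  · exact iff_of_true rfl h2
  · exact iff_of_false (by simp) h2

lemma exists_le_fillingOfBeta_eq_some_true {v : Fin k → ℕ} {i : Fin k} {j : Fin m}
    (h : OpenBox lam v i j) : ∃ i', i ≤ i' ∧ fillingOfBeta lam v i' j = some true := by
  set S := univ.filter fun t => OpenBox lam v t j
  have hiS : i ∈ S := by simpa [S] using h
  have hmax : S.max' ⟨i, hiS⟩ ∈ S := S.max'_mem _
  refine ⟨S.max' ⟨i, hiS⟩, S.le_max' i hiS, fillingOfBeta_eq_some_true_iff.2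
    ⟨by simpa [S] using hmax, fun t ht hopen => ?_⟩⟩
  exact (S.le_max' t (by simpa [S] using hopen)).not_gt ht

lemma isCatalanFilling_fillingOfBeta {v : Fin k → ℕ} (hm : ∀ i, lam i ≤ m)
    (hv : IsBetaVector lam v) : IsCatalanFilling lam (fillingOfBeta (m := m) lam v) := by
  refine ⟨fun i j h => ?_, fun i j hα i' hi' => ?_, fun i j hβ j' hj' => ?_,
    fun i j hj hnone => ?_⟩
  · unfold fillingOfBeta at h
    split_ifs at h with hβ hα
    · have := hv.1 i; omega
    · exact hα.1.2
    · exact absurd rfl h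
  · have hopen := (fillingOfBeta_eq_some_true_iff.1 hα).1
    unfold fillingOfBeta
    rw [if_neg, if_neg]
    · exact fun h => h.2 i hi' hopen
    · rcases hv.2 i' i hi' with h | h <;> simp only [OpenBox] at hopen <;> omega
  · have := fillingOfBeta_eq_some_false_iff.1 hβ
    have : (j' : ℕ) < j := hj'
    unfold fillingOfBeta
    rw [if_neg (by omega), if_neg (by unfold OpenBox; omega)]
  · by_cases hopen : v i ≤ j
    · obtain ⟨i', hii', hα⟩ := exists_le_fillingOfBeta_eq_some_true (m := m) ⟨hopen, hj⟩
      exact .inl ⟨i', lt_of_le_of_ne hii' fun h => by simp [h ▸ hnone] at hα, hα⟩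
    · have hvm := (hv.1 i).trans (hm i)
      have hβ : (j : ℕ) + 1 ≠ v i := fun h => by
        simp [fillingOfBeta, h] at hnone
      exact .inr ⟨⟨v i - 1, by omega⟩, Fin.lt_def.2 (by simp only; omega),
        fillingOfBeta_eq_some_false_iff.2 (by simp only; omega)⟩

end BetaVector

section CatalanFilling

variable {k m : ℕ} {lam : Fin k → ℕ} {f : Fin k → Fin m → Option Bool}

noncomputable def betaVector (f : Fin k → Fin m → Option Bool) : Fin k → ℕ := fun i =>
  if h : ∃ j, f i j = some false then (h.choose : ℕ) + 1 else 0

lemma betaVector_eq_succ_iff (hf : IsCatalanFilling lam f) {i : Fin k} {j : Fin m} :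
    betaVector f i = (j : ℕ) + 1 ↔ f i j = some false := by
  have hunique :
      ∀ {j'}, f i j' = some false → ∀ {j''}, j'' ≠ j' → f i j'' ≠ some false :=
    fun h' _ hne h'' => by
      rcases hne.lt_or_gt with hlt | hlt
      · simp [hf.2.2.1 _ _ h' _ hlt] at h''
      · simp [hf.2.2.1 _ _ h'' _ hlt] at h'
  unfold betaVector
  split_ifs with h
  · refine ⟨fun hj => Fin.ext (Nat.succ_injective hj) ▸ h.choose_spec, fun hj => ?_⟩
    by_contra hne
    exact hunique hj (fun heq => hne (by rw [heq])) h.choose_spec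
  · exact iff_of_false not_false fun hj => h ⟨j, hj⟩

lemma betaVector_eq_zero_iff {i : Fin k} :
    betaVector f i = 0 ↔ ∀ j, f i j ≠ some false := by
  unfold betaVector
  split_ifs with h
  · exact iff_of_false not_false fun hno => hno _ h.choose_spec
  · simpa using h

lemma exists_eq_some_false_of_betaVector_ne_zero {i : Fin k} (h : betaVector f i ≠ 0) :
    ∃ j : Fin m, f i j = some false ∧ (j : ℕ) + 1 = betaVector f i := by
  unfold betaVector at h ⊢
  split_ifs at h ⊢ with hβ
  · exact ⟨_, hβ.choose_spec, rfl⟩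
  · exact absurd rfl h

lemma openBox_of_eq_some_true (hf : IsCatalanFilling lam f) {i : Fin k} {j : Fin m}
    (hα : f i j = some true) : OpenBox lam (betaVector f) i j := by
  refine ⟨?_, hf.1 i j (by simp [hα])⟩
  by_contra! hlt
  obtain ⟨j', hβ, hj'⟩ :=
    exists_eq_some_false_of_betaVector_ne_zero (f := f) (i := i) (by omega)
  rcases lt_or_eq_of_le (show (j : ℕ) ≤ j' by omega) with hjj' | hjj'
  · simp [hf.2.2.1 i j' hβ j hjj'] at hα
  · simp [Fin.ext hjj' ▸ hα] at hβ

lemma exists_lt_eq_some_true_of_openBox (hf : IsCatalanFilling lam f) {i : Fin k} {j : Fin m}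
    (hopen : OpenBox lam (betaVector f) i j) (hnone : f i j = none) :
    ∃ i', i < i' ∧ f i' j = some true := by
  refine (hf.2.2.2 i j hopen.2 hnone).resolve_right fun ⟨j', hjj', hβ⟩ => ?_
  have := (betaVector_eq_succ_iff hf).2 hβ
  have : (j : ℕ) < j' := hjj'
  have := hopen.1
  omega

lemma exists_le_eq_some_true_of_openBox (hf : IsCatalanFilling lam f) {i : Fin k} {j : Fin m}
    (hopen : OpenBox lam (betaVector f) i j) : ∃ i', i ≤ i' ∧ f i' j = some true := by
  rcases hij : f i j with _ | _ | _
  · obtain ⟨i', hii', hα⟩ := exists_lt_eq_some_true_of_openBox hf hopen hij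
    exact ⟨i', hii'.le, hα⟩
  · have := (betaVector_eq_succ_iff hf).2 hij
    have := hopen.1
    omega
  · exact ⟨i, le_rfl, hij⟩

lemma eq_some_true_iff_lowest_openBox (hf : IsCatalanFilling lam f) {i : Fin k} {j : Fin m} :
    f i j = some true ↔
      OpenBox lam (betaVector f) i j ∧ ∀ i', i < i' → ¬ OpenBox lam (betaVector f) i' j := by
  refine ⟨fun hα => ⟨openBox_of_eq_some_true hf hα, fun i' hii' hopen => ?_⟩,
    fun ⟨hopen, hlow⟩ => ?_⟩
  · obtain ⟨i'', hi'i'', hα'⟩ := exists_le_eq_some_true_of_openBox hf hopen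
    simp [hf.2.1 i'' j hα' i (hii'.trans_le hi'i'')] at hα
  · obtain ⟨i', hii', hα⟩ := exists_le_eq_some_true_of_openBox hf hopen
    obtain rfl | hlt := hii'.eq_or_lt
    · exact hα
    · exact (hlow i' hlt (openBox_of_eq_some_true hf hα)).elim

lemma isBetaVector_betaVector (hf : IsCatalanFilling lam f) : IsBetaVector lam (betaVector f) := by
  refine ⟨fun i => ?_, fun i i' hii' => ?_⟩
  · by_cases h : betaVector f i = 0
    · omega
    · obtain ⟨j, hβ, hj⟩ := exists_eq_some_false_of_betaVector_ne_zero h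
      have := hf.1 i j (by simp [hβ])
      omega
  · by_contra! h
    obtain ⟨j, hβ, hj⟩ :=
      exists_eq_some_false_of_betaVector_ne_zero (f := f) (i := i) (by omega)
    obtain ⟨i'', hi'i'', hα⟩ :=
      exists_le_eq_some_true_of_openBox hf (i := i') (j := j) ⟨by omega, by omega⟩
    simp [hf.2.1 i'' j hα i (hii'.trans_le hi'i'')] at hβ

lemma eq_of_eq_some_false_iff_of_eq_some_true_iff {x y : Option Bool}
    (hf : x = some false ↔ y = some false) (ht : x = some true ↔ y = some true) : x = y := by
  rcases x with _ | _ | _ <;> rcases y with _ | _ | _ <;> simp_all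

lemma fillingOfBeta_betaVector (hf : IsCatalanFilling lam f) :
    fillingOfBeta lam (betaVector f) = f := by
  funext i j
  refine eq_of_eq_some_false_iff_of_eq_some_true_iff ?_ ?_
  · rw [fillingOfBeta_eq_some_false_iff, eq_comm, betaVector_eq_succ_iff hf]
  · rw [fillingOfBeta_eq_some_true_iff, eq_some_true_iff_lowest_openBox hf]

lemma betaVector_fillingOfBeta {v : Fin k → ℕ} (hm : ∀ i, lam i ≤ m)
    (hv : IsBetaVector lam v) :
    betaVector (fillingOfBeta (m := m) lam v) = v := by
  funext i
  by_cases h : v i = 0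
  · rw [h, betaVector_eq_zero_iff]
    intro j hβ
    have := fillingOfBeta_eq_some_false_iff.1 hβ
    omega
  · have := (hv.1 i).trans (hm i)
    have hβ : fillingOfBeta (m := m) lam v i ⟨v i - 1, by omega⟩ = some false :=
      fillingOfBeta_eq_some_false_iff.2 (by simp only; omega)
    rw [(betaVector_eq_succ_iff (isCatalanFilling_fillingOfBeta hm hv)).2 hβ]
    simp only
    omega

noncomputable def betaVectorEquiv (hm : ∀ i, lam i ≤ m) :
    {v : Fin k → ℕ // IsBetaVector lam v} ≃
      {f : Fin k → Fin m → Option Bool // IsCatalanFilling lam f} where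
  toFun v := ⟨fillingOfBeta lam v, isCatalanFilling_fillingOfBeta hm v.2⟩
  invFun f := ⟨betaVector f.1, isBetaVector_betaVector f.2⟩
  left_inv v := Subtype.ext (betaVector_fillingOfBeta hm v.2)
  right_inv f := Subtype.ext (fillingOfBeta_betaVector f.2)

end CatalanFilling

section Sorting

variable {k : ℕ}

/-- For an antitone `g`, the lattice path of `g` crosses column `x` on the horizontal line
`y = countGT g x` (lines counted from the top). -/
def countGT (g : Fin k → ℕ) (x : ℕ) : ℕ := #{i | x < g i}

def tupleValues (g : Fin k → ℕ) : Multiset ℕ := univ.val.map g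

lemma tupleValues_comp_perm (g : Fin k → ℕ) (σ : Equiv.Perm (Fin k)) :
    tupleValues (g ∘ σ) = tupleValues g := by
  rw [tupleValues, ← Multiset.map_map, Multiset.map_univ_val_equiv, tupleValues]

lemma countGT_eq_countP_tupleValues (g : Fin k → ℕ) (x : ℕ) :
    countGT g x = (tupleValues g).countP (x < ·) := by
  rw [tupleValues, Multiset.countP_map]
  rfl

lemma card_filter_eq_zero_eq_countP_tupleValues (g : Fin k → ℕ) :
    #{i | g i = 0} = (tupleValues g).countP (· = 0) := by
  rw [tupleValues, Multiset.countP_map]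
  rfl

lemma countGT_eq_of_tupleValues_eq {g g' : Fin k → ℕ} (h : tupleValues g = tupleValues g') :
    countGT g = countGT g' :=
  funext fun x => by rw [countGT_eq_countP_tupleValues, h, countGT_eq_countP_tupleValues]

lemma Antitone.lt_iff_lt_countGT {g : Fin k → ℕ} (hg : Antitone g) (t : Fin k) (x : ℕ) :
    x < g t ↔ (t : ℕ) < countGT g x := by
  constructor
  · intro h
    have : Iic t ⊆ ({i | x < g i} : Finset (Fin k)) := fun s hs =>
      mem_filter.2 ⟨mem_univ s, h.trans_le (hg (mem_Iic.1 hs))⟩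
    simpa [countGT] using card_le_card this
  · intro h
    by_contra! hle
    have : ({i | x < g i} : Finset (Fin k)) ⊆ Iio t := fun s hs => mem_Iio.2 <| by
      by_contra! hts
      exact lt_irrefl x ((mem_filter.1 hs).2.trans_le ((hg hts).trans hle))
    have := card_le_card this
    simp only [Fin.card_Iio] at this
    exact (h.trans_le this).false

lemma Antitone.eq_of_countGT_eq {g g' : Fin k → ℕ} (hg : Antitone g) (hg' : Antitone g')
    (h : ∀ x, countGT g x = countGT g' x) : g = g' :=
  funext fun t => eq_of_forall_lt_iff fun x => by
    rw [hg.lt_iff_lt_countGT, hg'.lt_iff_lt_countGT, h]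

noncomputable def sortDesc (g : Fin k → ℕ) : Fin k → ℕ := g ∘ Tuple.sort g ∘ Fin.rev

lemma sortDesc_antitone (g : Fin k → ℕ) : Antitone (sortDesc g) :=
  (Tuple.monotone_sort g).comp_antitone Fin.rev_anti

lemma tupleValues_sortDesc (g : Fin k → ℕ) : tupleValues (sortDesc g) = tupleValues g :=
  tupleValues_comp_perm g (Fin.revPerm.trans (Tuple.sort g))

lemma countGT_sortDesc (g : Fin k → ℕ) : countGT (sortDesc g) = countGT g :=
  countGT_eq_of_tupleValues_eq (tupleValues_sortDesc g)

end Sorting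

section PathBijection

variable {k : ℕ} {lam : Fin k → ℕ}

/-- If two β-vectors with the same values agree below row `t`, then the value of `v'` in row
`t` occurs in `v` in some row `s ≤ t`, and the β-vector condition forces it to be `≤ v t`. -/
lemma IsBetaVector.le_of_tupleValues_eq {v v' : Fin k → ℕ} (hv : IsBetaVector lam v)
    (hv' : IsBetaVector lam v') (hvals : tupleValues v = tupleValues v') {t : Fin k}
    (hagree : ∀ s, t < s → v s = v' s) : v' t ≤ v t := by
  have hsplit : ∀ g : Fin k → ℕ, tupleValues g =
      (univ.filter (· ≤ t)).val.map g + (univ.filter fun s => ¬ s ≤ t).val.map g := by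
    intro g
    rw [tupleValues, ← Multiset.map_add, filter_val, filter_val, Multiset.filter_add_not]
  have htail : (univ.filter fun s => ¬ s ≤ t).val.map v
      = (univ.filter fun s => ¬ s ≤ t).val.map v' :=
    Multiset.map_congr rfl fun s hs => hagree s (by simpa using hs)
  have hhead : (univ.filter (· ≤ t)).val.map v = (univ.filter (· ≤ t)).val.map v' := by
    rw [hsplit v, hsplit v', htail] at hvals
    exact add_right_cancel hvals
  have hmem : v' t ∈ (univ.filter (· ≤ t)).val.map v :=
    hhead ▸ Multiset.mem_map_of_mem v' (by simp)
  obtain ⟨s, hs, hsv⟩ := Multiset.mem_map.1 hmem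
  rcases (by simpa using hs : s ≤ t).lt_or_eq with hst | rfl
  · have := hv'.1 t
    rcases hv.2 s t hst with h | h <;> omega
  · exact hsv.ge

lemma IsBetaVector.eq_of_tupleValues_eq {v v' : Fin k → ℕ} (hv : IsBetaVector lam v)
    (hv' : IsBetaVector lam v') (hvals : tupleValues v = tupleValues v') : v = v' := by
  by_contra hne
  obtain ⟨s, hs⟩ := Function.ne_iff.1 hne
  obtain ⟨t, ht, htmax⟩ := (univ.filter fun s => v s ≠ v' s).exists_max_image id
    ⟨s, by simpa using hs⟩
  have hagree : ∀ s, t < s → v s = v' s := fun s hts => by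
    by_contra h
    exact (htmax s (by simpa using h)).not_gt hts
  have h1 := hv.le_of_tupleValues_eq hv' hvals hagree
  have h2 := hv'.le_of_tupleValues_eq hv hvals.symm fun s hts => (hagree s hts).symm
  exact (by simpa using ht : v t ≠ v' t) (le_antisymm h2 h1)

/-- A rearrangement of `C` below `lam` maximising `∑ t, (t + 1) * C (σ t)` is a β-vector: a
violation at rows `i < i'` could be swapped away, increasing the sum. -/
lemma exists_isBetaVector_tupleValues_eq {C : Fin k → ℕ} (hC : ∀ i, C i ≤ lam i) :
    ∃ v, IsBetaVector lam v ∧ tupleValues v = tupleValues C := by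
  obtain ⟨σ, hσ, hmax⟩ :=
    (univ.filter fun σ : Equiv.Perm (Fin k) => ∀ t, C (σ t) ≤ lam t).exists_max_image
      (fun σ => ∑ t : Fin k, ((t : ℕ) + 1) * C (σ t)) ⟨1, by simpa using hC⟩
  simp only [mem_filter, mem_univ, true_and] at hσ hmax
  refine ⟨C ∘ σ, ⟨hσ, fun i i' hii' => ?_⟩, tupleValues_comp_perm C σ⟩
  by_contra! h
  obtain ⟨hlt, hle⟩ := h
  simp only [Function.comp_apply] at hlt hle
  set σ' := (Equiv.swap i i').trans σ
  have hσ' : ∀ t, C (σ' t) ≤ lam t := fun t => by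
    rcases eq_or_ne t i with rfl | hti
    · simpa [σ'] using hlt.le.trans (hσ t)
    rcases eq_or_ne t i' with rfl | hti'
    · simpa [σ'] using hle
    · simpa [σ', Equiv.swap_apply_of_ne_of_ne hti hti'] using hσ t
  have hpot := hmax σ' hσ'
  have hsplit : ∀ u : Fin k → ℕ, ∑ t, u t = ∑ t ∈ univ \ {i, i'}, u t + (u i + u i') :=
    fun u => by rw [← sum_pair hii'.ne, sum_sdiff (subset_univ _)]
  rw [hsplit, hsplit (fun t => ((t : ℕ) + 1) * C (σ t))] at hpot
  have hrest : ∑ t ∈ univ \ {i, i'}, ((t : ℕ) + 1) * C (σ' t)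
      = ∑ t ∈ univ \ {i, i'}, ((t : ℕ) + 1) * C (σ t) := sum_congr rfl fun t ht => by
    simp only [mem_sdiff, mem_insert, mem_singleton, not_or] at ht
    simp [σ', Equiv.swap_apply_of_ne_of_ne ht.2.1 ht.2.2]
  rw [hrest] at hpot
  simp only [σ', Equiv.trans_apply, Equiv.swap_apply_left, Equiv.swap_apply_right] at hpot
  have : (i : ℕ) < i' := hii'
  nlinarith

lemma sortDesc_le_of_isBetaVector (hlam : Antitone lam) {v : Fin k → ℕ}
    (hv : IsBetaVector lam v) (i : Fin k) : sortDesc v i ≤ lam i := by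
  by_contra! h
  have hlow := (sortDesc_antitone v).lt_iff_lt_countGT i (lam i) |>.1 h
  rw [countGT_sortDesc] at hlow
  have : ({t | lam i < v t} : Finset (Fin k)) ⊆ Iio i := fun t ht => mem_Iio.2 <| by
    by_contra! hit
    have := hv.1 t
    have := hlam hit
    simp only [mem_filter, mem_univ, true_and] at ht
    omega
  have := card_le_card this
  simp only [Fin.card_Iio] at this
  exact (hlow.trans_le this).false

noncomputable def sortDescEquiv (hlam : Antitone lam) :
    {v : Fin k → ℕ // IsBetaVector lam v} ≃ {C : Fin k → ℕ // IsCatalanPath lam C} :=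
  Equiv.ofBijective
    (fun v => ⟨sortDesc v.1, sortDesc_le_of_isBetaVector hlam v.2,
      fun _ _ h => sortDesc_antitone v.1 h⟩)
    ⟨fun v v' h => Subtype.ext <| v.2.eq_of_tupleValues_eq v'.2 <| by
        rw [← tupleValues_sortDesc v.1, ← tupleValues_sortDesc v'.1]
        exact congrArg (tupleValues ∘ Subtype.val) h,
      fun C => by
        obtain ⟨v, hv, hvals⟩ := exists_isBetaVector_tupleValues_eq C.2.1
        refine ⟨⟨v, hv⟩, Subtype.ext ?_⟩
        refine (sortDesc_antitone v).eq_of_countGT_eq (fun _ _ h => C.2.2 _ _ h) fun x => ?_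
        rw [countGT_sortDesc, countGT_eq_of_tupleValues_eq hvals]⟩

end PathBijection

section Weights

variable {n k : ℕ}

@[simp]
lemma extSeq_zero (g : Fin k → ℕ) : extSeq n k g 0 = n - k := rfl

lemma extSeq_succ (g : Fin k → ℕ) {i : ℕ} (h : i < k) :
    extSeq n k g (i + 1) = g ⟨i, h⟩ := by
  simp [extSeq, h]

lemma extSeq_of_lt (g : Fin k → ℕ) {t : ℕ} (h : k < t) : extSeq n k g t = 0 := by
  simp [extSeq, h.not_ge]
  omega

lemma extSeq_antitone {g : Fin k → ℕ} (hg : Antitone g) (hgm : ∀ i, g i ≤ n - k) :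
    Antitone (extSeq n k g) := by
  intro s t hst
  rcases t.eq_zero_or_pos with rfl | ht
  · simp [Nat.le_zero.1 hst]
  rcases le_or_gt t k with htk | htk
  · obtain ⟨s', rfl⟩ | rfl : (∃ s', s = s' + 1) ∨ s = 0 := by
      rcases s with _ | s' <;> simp
    · obtain ⟨t', rfl⟩ : ∃ t', t = t' + 1 := ⟨t - 1, by omega⟩
      rw [extSeq_succ g (by omega), extSeq_succ g (by omega)]
      exact hg (Fin.le_def.2 (by simp only; omega))
    · obtain ⟨t', rfl⟩ : ∃ t', t = t' + 1 := ⟨t - 1, by omega⟩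
      rw [extSeq_succ g (by omega)]
      exact hgm _
  · rw [extSeq_of_lt g htk]
    exact Nat.zero_le _

lemma countGT_le (g : Fin k → ℕ) (x : ℕ) : countGT g x ≤ k :=
  (card_le_univ _).trans (Fintype.card_fin k).le

lemma lt_extSeq_iff {g : Fin k → ℕ} (hg : Antitone g) {x i : ℕ} (hx : x < n - k)
    (hi : i ≤ k + 1) : x < extSeq n k g i ↔ i ≤ countGT g x := by
  rcases i with _ | i
  · simpa using hx
  rcases Nat.lt_or_ge i k with hik | hik
  · rw [extSeq_succ g hik, hg.lt_iff_lt_countGT]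
    rfl
  · rw [extSeq_of_lt g (by omega)]
    have := countGT_le g x
    omega

lemma extSeq_le_and_lt_extSeq_iff {g : Fin k → ℕ} (hg : Antitone g) {x i : ℕ}
    (hx : x < n - k) (hi : i ≤ k) :
    extSeq n k g (i + 1) ≤ x ∧ x < extSeq n k g i ↔ countGT g x = i := by
  rw [← not_lt, lt_extSeq_iff hg hx (by omega), lt_extSeq_iff hg hx (by omega)]
  omega

lemma prod_range_prod_Ico_of_antitone {M : Type*} [CommMonoid M] (h : ℕ → M) {e : ℕ → ℕ}
    (he : Antitone e) (N : ℕ) :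
    ∏ i ∈ range N, ∏ x ∈ Ico (e (i + 1)) (e i), h x = ∏ x ∈ Ico (e N) (e 0), h x := by
  induction N with
  | zero => simp
  | succ N ih =>
    rw [prod_range_succ, ih, mul_comm, prod_Ico_consecutive _ (he N.le_succ) (he N.zero_le)]

lemma pwt_eq (a b : ℝ) {lam C : Fin k → ℕ} (hlam : Antitone lam) (hC : Antitone C)
    (hCle : ∀ i, C i ≤ n - k) :
    pwt a b n k lam C =
      b⁻¹ ^ #{i | C i = 0} * a⁻¹ ^ #{x : Fin (n - k) | countGT lam x = countGT C x} := by
  unfold pwt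
  congr 1
  · rw [prod_ite, prod_const, prod_const, one_pow, mul_one]
  have hterm : ∀ i ∈ range (k + 1), ∀ x ∈ Ico (extSeq n k C (i + 1)) (extSeq n k C i),
      (if extSeq n k lam (i + 1) ≤ x ∧ x < extSeq n k lam i then a⁻¹ else 1)
        = if countGT lam x = countGT C x then a⁻¹ else 1 := by
    intro i hi x hx
    rw [mem_range] at hi
    rw [mem_Ico] at hx
    have hx' : x < n - k := hx.2.trans_le (extSeq_antitone hC hCle i.zero_le)
    simp only [extSeq_le_and_lt_extSeq_iff hlam hx' (by omega : i ≤ k),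
      (extSeq_le_and_lt_extSeq_iff hC hx' (by omega : i ≤ k)).1 hx]
  rw [prod_congr rfl fun i hi => prod_congr rfl (hterm i hi),
    prod_range_prod_Ico_of_antitone _ (extSeq_antitone hC hCle), extSeq_of_lt C k.lt_succ_self,
    extSeq_zero, Nat.Ico_zero_eq_range, ← Fin.prod_univ_eq_prod_range
      (fun x => if countGT lam x = countGT C x then a⁻¹ else 1),
    prod_ite, prod_const, prod_const, one_pow, mul_one]

lemma forall_not_openBox_iff_countGT_eq {lam v : Fin k → ℕ} (hv : ∀ i, v i ≤ lam i)
    (x : ℕ) :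
    (∀ i, ¬ OpenBox lam v i x) ↔ countGT lam x = countGT v x := by
  have hsub : ({i | x < v i} : Finset (Fin k)) ⊆ ({i | x < lam i} : Finset (Fin k)) :=
    fun i hi => by
      simp only [mem_filter, mem_univ, true_and] at hi ⊢
      exact hi.trans_le (hv i)
  constructor
  · intro h
    refine congrArg card (filter_congr fun i _ => ?_)
    have := h i
    have := hv i
    simp only [OpenBox, not_and, not_lt] at *
    omega
  · intro h i ⟨hvx, hxl⟩
    have hi : i ∈ ({i | x < lam i} : Finset (Fin k)) := by simpa using hxl
    rw [← eq_of_subset_of_card_le hsub h.le] at hi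
    simp only [mem_filter, mem_univ, true_and] at hi
    omega

lemma tabWeight_fillingOfBeta (a b : ℝ) {lam v : Fin k → ℕ} (hm : ∀ i, lam i ≤ n - k)
    (hv : IsBetaVector lam v) :
    tabWeight a b n (fillingOfBeta (m := n - k) lam v) = (a * b) ^ n *
      a⁻¹ ^ #{x : Fin (n - k) | countGT lam x = countGT v x} * b⁻¹ ^ #{i | v i = 0} := by
  have hcol : ∀ x : Fin (n - k),
      (∀ i, fillingOfBeta lam v i x ≠ some true) ↔ countGT lam x = countGT v x := by
    intro x
    rw [← forall_not_openBox_iff_countGT_eq hv.1]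
    refine ⟨fun h i hopen => ?_, fun h i hα => h i (fillingOfBeta_eq_some_true_iff.1 hα).1⟩
    obtain ⟨i', -, hα⟩ := exists_le_fillingOfBeta_eq_some_true hopen
    exact h i' hα
  have hrow : ∀ i, (∀ j : Fin (n - k), fillingOfBeta lam v i j ≠ some false) ↔ v i = 0 := by
    intro i
    simp only [ne_eq, fillingOfBeta_eq_some_false_iff]
    refine ⟨fun h => ?_, fun h j => by omega⟩
    by_contra h0
    have := (hv.1 i).trans (hm i)
    exact h ⟨v i - 1, by omega⟩ (by simp only; omega)
  simp only [tabWeight, hcol, hrow]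

lemma pathWt_sortDesc (a b : ℝ) {lam v : Fin k → ℕ} (hlam : Antitone lam)
    (hm : ∀ i, lam i ≤ n - k) (hv : IsBetaVector lam v) :
    pathWt a b n k lam (sortDesc v) = tabWeight a b n (fillingOfBeta (m := n - k) lam v) := by
  have hle i := (sortDesc_le_of_isBetaVector hlam hv i).trans (hm i)
  rw [pathWt, pwt_eq a b hlam (sortDesc_antitone v) hle, tabWeight_fillingOfBeta a b hm hv,
    countGT_sortDesc, card_filter_eq_zero_eq_countP_tupleValues, tupleValues_sortDesc,
    ← card_filter_eq_zero_eq_countP_tupleValues]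
  ring

end Weights

lemma Finset.sum_eq_sum_of_subtypeEquiv {α β M : Type*} [AddCommMonoid M] {s : Finset α}
    {t : Finset β} {p : α → Prop} {q : β → Prop} (hs : ∀ x, x ∈ s ↔ p x)
    (ht : ∀ y, y ∈ t ↔ q y) (e : {x // p x} ≃ {y // q y}) {f : α → M} {g : β → M}
    (h : ∀ x, f x.1 = g (e x).1) : ∑ x ∈ s, f x = ∑ y ∈ t, g y :=
  sum_bij' (fun x hx => e ⟨x, (hs x).1 hx⟩) (fun y hy => e.symm ⟨y, (ht y).1 hy⟩)
    (fun _ _ => (ht _).2 (e _).2) (fun _ _ => (hs _).2 (e.symm _).2)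
    (by simp) (by simp) (fun x _ => h ⟨x, _⟩)

theorem stmt4_general (n k : ℕ) (a b : ℝ)
    (τ : Fin n → Bool) (hτ : onesCount τ = k)
    (lam : Fin k → ℕ) (hlam : ∀ i : Fin k, lam i = lambdaOf τ ((i : ℕ) + 1)) :
    (∃ e : {C : Fin k → ℕ // IsCatalanPath lam C} ≃
        {f : Fin k → Fin (n - k) → Option Bool // IsCatalanFilling lam f},
      ∀ C, pathWt a b n k lam C.1 = tabWeight a b n (e C).1) ∧
    (∑ C ∈ (Fintype.piFinset fun i : Fin k => range (lam i + 1)).filter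
        (fun C => ∀ i j : Fin k, i ≤ j → C j ≤ C i), pathWt a b n k lam C)
      = ∑ f : Fin k → Fin (n - k) → Option Bool,
          if IsCatalanFilling lam f then tabWeight a b n f else 0 := by
  have hanti : Antitone lam := fun i j hij => by
    simpa only [hlam] using lambdaOf_antitone τ (Nat.succ_le_succ (Fin.le_def.1 hij))
  have hle : ∀ i, lam i ≤ n - k := fun i => hτ ▸ hlam i ▸ lambdaOf_le_sub_onesCount τ _
  let e := (sortDescEquiv hanti).symm.trans (betaVectorEquiv hle)
  have he : ∀ C, pathWt a b n k lam C.1 = tabWeight a b n (e C).1 := fun C => by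
    obtain ⟨v, rfl⟩ := (sortDescEquiv hanti).surjective C
    simp only [e, Equiv.trans_apply, Equiv.symm_apply_apply]
    exact pathWt_sortDesc a b hanti hle v.2
  refine ⟨⟨e, he⟩, ?_⟩
  rw [← sum_filter]
  refine sum_eq_sum_of_subtypeEquiv (fun C => ?_) (fun f => by simp) e he
  simp only [mem_filter, Fintype.mem_piFinset, mem_range, Nat.lt_succ_iff, IsCatalanPath]

/-- **Weight-preserving bijection between Catalan paths and Catalan tableaux**
(Lemma 10 of the paper): for a type `τ` with exactly `k` ones and associated
shape `λ(τ)`, there is a weight-preserving bijection between Catalan paths of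
size `(n,k)` constrained by the Young diagram of shape `λ(τ)` and Catalan
alternative tableaux of size `(n,k)` of type `τ`; in particular the weighted
sums agree: `Σ_C wt(C) = Σ_T wt(T)`. -/
theorem stmt4 (n k : ℕ) (a b : ℝ) (ha : a ≠ 0) (hb : b ≠ 0)
    (τ : Fin n → Bool) (hτ : onesCount τ = k)
    (lam : Fin k → ℕ) (hlam : ∀ i : Fin k, lam i = lambdaOf τ ((i : ℕ) + 1)) :
    (∃ e : {C : Fin k → ℕ // IsCatalanPath lam C} ≃
        {f : Fin k → Fin (n - k) → Option Bool // IsCatalanFilling lam f},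
      ∀ C, pathWt a b n k lam C.1 = tabWeight a b n (e C).1) ∧
    (∑ C ∈ (Fintype.piFinset fun i : Fin k => range (lam i + 1)).filter
        (fun C => ∀ i j : Fin k, i ≤ j → C j ≤ C i), pathWt a b n k lam C)
      = ∑ f : Fin k → Fin (n - k) → Option Bool,
          if IsCatalanFilling lam f then tabWeight a b n f else 0 :=
  stmt4_general n k a b τ hτ lam hlam
end

section
/- Let τ ∈ {0,1}^n have exactly k ones and associated partition λ(τ) = (λ_1,…,λ_k). Then the number of Catalan alternative tableaux of type τ equals the number of k-tuples of integers (C_1,…,C_k) with λ_i ≥ C_i for all i and C_1 ≥ C_2 ≥ … ≥ C_k ≥ 0 (equivalently, the number of partitions with at most k parts contained in λ(τ)). -/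
open Finset

/-! Recording in each row `i` one more than the column of its `β` (or `0`) identifies the Catalan
tableaux of shape `λ` with the vectors `v` with `v i ≤ λ i` such that no `β` of a row `i' < i` lies
in `(v i, λ i]`: those are the boxes of row `i` right of its `β`, each of which lies on or above an
`α`, and the tableau is recovered by putting an `α` into the lowest such box of every column.
Such vectors correspond to partitions `C ⊆ λ` via `C i = #(⋃_{j ≥ i} (v j, λ j])`. Going up one
row, with `U` the union for the rows below, `v i` ranges over `[0, λ i] \ U`, on which
`b ↦ #(U ∪ (b, λ i])` is strictly decreasing, hence a bijection onto `[#U, λ i]`. -/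

lemma Option.bool_eq_of_iff {x y : Option Bool} (hfalse : x = some false ↔ y = some false)
    (htrue : x = some true ↔ y = some true) : x = y := by
  rcases x with _ | _ | _ <;> rcases y with _ | _ | _ <;> simp_all

section BetaColumns

variable {k m : ℕ}

-- No `β` lies above a box that is inside the diagram and strictly right of its own row's `β`.
def betaVectors (lam : Fin k → ℕ) : Finset (Fin k → ℕ) :=
  (Fintype.piFinset fun i => range (lam i + 1)).filter fun v =>
    ∀ i j, i < j → v i ∉ Ioc (v j) (lam j)

lemma mem_betaVectors_iff {lam v : Fin k → ℕ} :
    v ∈ betaVectors lam ↔ (∀ i, v i ≤ lam i) ∧ ∀ i j, i < j → v i ∉ Ioc (v j) (lam j) := by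
  simp [betaVectors]

-- `betaCol f i` is one more than the column of the `β` in row `i`, and `0` if there is none.
def betaCol (f : Fin k → Fin m → Option Bool) (i : Fin k) : ℕ :=
  ∑ j : Fin m, if f i j = some false then (j : ℕ) + 1 else 0

lemma exists_eq_some_false_of_betaCol_ne_zero {f : Fin k → Fin m → Option Bool} {i : Fin k}
    (h : betaCol f i ≠ 0) : ∃ j, f i j = some false := by
  obtain ⟨j, -, hj⟩ := exists_ne_zero_of_sum_ne_zero h
  exact ⟨j, of_not_not fun h' => hj (if_neg h')⟩

-- The `α`s sit in the lowest box of each column lying strictly right of its row's `β`.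
def fillingOfBetaCols (lam v : Fin k → ℕ) : Fin k → Fin m → Option Bool := fun i j =>
  if (j : ℕ) + 1 = v i then some false
  else if v i ≤ j ∧ j < lam i ∧ ∀ i', i < i' → ¬(v i' ≤ j ∧ j < lam i') then some true
  else none

variable {lam v : Fin k → ℕ} {i : Fin k} {j : Fin m}

lemma fillingOfBetaCols_eq_some_false_iff :
    fillingOfBetaCols lam v i j = some false ↔ (j : ℕ) + 1 = v i := by
  unfold fillingOfBetaCols
  split_ifs <;> simp_all

lemma fillingOfBetaCols_eq_some_true_iff :
    fillingOfBetaCols lam v i j = some true ↔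
      v i ≤ j ∧ j < lam i ∧ ∀ i', i < i' → ¬(v i' ≤ j ∧ j < lam i') := by
  unfold fillingOfBetaCols
  split_ifs <;> simp_all
  omega

lemma fillingOfBetaCols_eq_none_iff :
    fillingOfBetaCols lam v i j = none ↔ (j : ℕ) + 1 ≠ v i ∧
      ¬(v i ≤ j ∧ j < lam i ∧ ∀ i', i < i' → ¬(v i' ≤ j ∧ j < lam i')) := by
  unfold fillingOfBetaCols
  split_ifs <;> simp_all

lemma isCatalanFilling_fillingOfBetaCols (hv : v ∈ betaVectors lam) (hlam : ∀ i, lam i ≤ m) :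
    IsCatalanFilling lam (fillingOfBetaCols (m := m) lam v) := by
  obtain ⟨hvlam, hvIoc⟩ := mem_betaVectors_iff.1 hv
  refine ⟨fun i j hne => ?_, fun i j hα i' hi' => ?_, fun i j hβ j' hj' => ?_, fun i j hj hnone => ?_⟩
  · rcases hψ : fillingOfBetaCols (m := m) lam v i j with _ | _ | _
    · exact (hne hψ).elim
    · have := fillingOfBetaCols_eq_some_false_iff.1 hψ
      have := hvlam i
      omega
    · exact (fillingOfBetaCols_eq_some_true_iff.1 hψ).2.1
  · obtain ⟨h1, h2, -⟩ := fillingOfBetaCols_eq_some_true_iff.1 hα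
    have := hvIoc i' i hi'
    rw [mem_Ioc] at this
    exact fillingOfBetaCols_eq_none_iff.2 ⟨by omega, fun h => h.2.2 i hi' ⟨h1, h2⟩⟩
  · have := fillingOfBetaCols_eq_some_false_iff.1 hβ
    have : (j' : ℕ) < j := hj'
    exact fillingOfBetaCols_eq_none_iff.2 ⟨by omega, by omega⟩
  · obtain ⟨hne, hnα⟩ := fillingOfBetaCols_eq_none_iff.1 hnone
    by_cases hvj : v i ≤ j
    · left
      have hlow : (univ.filter fun i' => i < i' ∧ v i' ≤ j ∧ j < lam i').Nonempty := by
        simp only [not_and, not_forall, not_not, exists_prop] at hnα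
        obtain ⟨i', hi', hi'j⟩ := hnα hvj hj
        exact ⟨i', mem_filter.2 ⟨mem_univ _, hi', hi'j⟩⟩
      obtain ⟨i', hi', hmax⟩ := exists_max_image _ id hlow
      simp only [mem_filter, mem_univ, true_and, id] at hi' hmax
      refine ⟨i', hi'.1, fillingOfBetaCols_eq_some_true_iff.2 ⟨hi'.2.1, hi'.2.2, ?_⟩⟩
      exact fun i'' hi'' hi''j => (hmax i'' ⟨hi'.1.trans hi'', hi''j⟩).not_gt hi''
    · right
      refine ⟨⟨v i - 1, by have := hvlam i; have := hlam i; omega⟩, ?_, ?_⟩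
      · show (j : ℕ) < v i - 1
        omega
      · rw [fillingOfBetaCols_eq_some_false_iff]
        show v i - 1 + 1 = v i
        omega

namespace IsCatalanFilling

variable {f : Fin k → Fin m → Option Bool} (hf : IsCatalanFilling lam f)
include hf

lemma betaCol_eq_of_eq_some_false (h : f i j = some false) : betaCol f i = j + 1 := by
  rw [betaCol, sum_eq_single_of_mem j (mem_univ j), if_pos h]
  intro j' _ hj'
  refine if_neg fun h' => ?_
  rcases lt_or_gt_of_ne hj' with hlt | hlt
  · simp [hf.2.2.1 i j h j' hlt] at h'
  · simp [hf.2.2.1 i j' h' j hlt] at h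

lemma eq_some_false_iff : f i j = some false ↔ (j : ℕ) + 1 = betaCol f i := by
  refine ⟨fun h => (hf.betaCol_eq_of_eq_some_false h).symm, fun h => ?_⟩
  obtain ⟨j₀, hj₀⟩ := exists_eq_some_false_of_betaCol_ne_zero (f := f) (i := i) (by omega)
  rwa [show j = j₀ from Fin.ext (by have := hf.betaCol_eq_of_eq_some_false hj₀; omega)]

lemma betaCol_le : betaCol f i ≤ lam i := by
  by_cases h0 : betaCol f i = 0
  · omega
  obtain ⟨j₀, hj₀⟩ := exists_eq_some_false_of_betaCol_ne_zero h0
  have := hf.1 i j₀ (by simp [hj₀])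
  have := hf.betaCol_eq_of_eq_some_false hj₀
  omega

lemma betaCol_le_of_eq_some_true (h : f i j = some true) : betaCol f i ≤ j := by
  by_contra! hlt
  obtain ⟨j₀, hj₀⟩ := exists_eq_some_false_of_betaCol_ne_zero (f := f) (i := i) (by omega)
  have hj₀' := hf.betaCol_eq_of_eq_some_false hj₀
  have hjj₀ : j < j₀ := by
    refine Fin.lt_def.2 (lt_of_le_of_ne (by omega) fun hjj => ?_)
    simp [Fin.ext hjj ▸ h] at hj₀
  simp [hf.2.2.1 i j₀ hj₀ j hjj₀] at h

lemma betaCol_notMem_Ioc {i' : Fin k} (hlt : i' < i) :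
    betaCol f i' ∉ Ioc (betaCol f i) (lam i) := by
  rw [mem_Ioc]
  rintro ⟨hgt, hle⟩
  obtain ⟨b, hb⟩ := exists_eq_some_false_of_betaCol_ne_zero (f := f) (i := i') (by omega)
  have hb' := hf.betaCol_eq_of_eq_some_false hb
  -- The box of row `i` below the `β` of row `i'` holds no symbol, yet cannot be empty either.
  have hnone : f i b = none := by
    rcases hfb : f i b with _ | _ | _
    · rfl
    · have := hf.betaCol_eq_of_eq_some_false hfb
      omega
    · simp [hf.2.1 i b hfb i' hlt] at hb
  rcases hf.2.2.2 i b (by omega) hnone with ⟨i₂, hi₂, hα⟩ | ⟨j₂, hj₂, hβ⟩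
  · simp [hf.2.1 i₂ b hα i' (hlt.trans hi₂)] at hb
  · have := hf.betaCol_eq_of_eq_some_false hβ
    have : (b : ℕ) < j₂ := hj₂
    omega

lemma exists_eq_some_true_of_betaCol_le (hβ : betaCol f i ≤ j) (hj : j < lam i) :
    ∃ i', i ≤ i' ∧ f i' j = some true := by
  rcases hfij : f i j with _ | _ | _
  · rcases hf.2.2.2 i j hj hfij with ⟨i', hi', hα⟩ | ⟨j', hj', hβ'⟩
    · exact ⟨i', hi'.le, hα⟩
    · have := hf.betaCol_eq_of_eq_some_false hβ'
      have : (j : ℕ) < j' := hj'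
      omega
  · have := hf.betaCol_eq_of_eq_some_false hfij
    omega
  · exact ⟨i, le_rfl, hfij⟩

lemma eq_some_true_iff : f i j = some true ↔
    betaCol f i ≤ j ∧ j < lam i ∧ ∀ i', i < i' → ¬(betaCol f i' ≤ j ∧ j < lam i') := by
  constructor
  · intro h
    refine ⟨hf.betaCol_le_of_eq_some_true h, hf.1 i j (by simp [h]), ?_⟩
    rintro i' hii' ⟨hβ, hj⟩
    obtain ⟨i₂, hi₂, hα⟩ := hf.exists_eq_some_true_of_betaCol_le hβ hj
    simp [hf.2.1 i₂ j hα i (hii'.trans_le hi₂)] at h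
  · rintro ⟨hβ, hj, hlow⟩
    obtain ⟨i₂, hi₂, hα⟩ := hf.exists_eq_some_true_of_betaCol_le hβ hj
    rcases hi₂.eq_or_lt with rfl | hlt
    · exact hα
    · exact (hlow i₂ hlt ⟨hf.betaCol_le_of_eq_some_true hα, hf.1 i₂ j (by simp [hα])⟩).elim

lemma fillingOfBetaCols_betaCol : fillingOfBetaCols lam (betaCol f) = f := by
  funext i j
  refine Option.bool_eq_of_iff ?_ ?_
  · rw [fillingOfBetaCols_eq_some_false_iff, hf.eq_some_false_iff]
  · rw [fillingOfBetaCols_eq_some_true_iff, hf.eq_some_true_iff]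

end IsCatalanFilling

lemma betaCol_fillingOfBetaCols (hv : v ∈ betaVectors lam) (hlam : ∀ i, lam i ≤ m) :
    betaCol (fillingOfBetaCols (m := m) lam v) = v := by
  funext i
  by_cases h0 : v i = 0
  · rw [h0, betaCol]
    refine sum_eq_zero fun j _ => if_neg fun h => ?_
    have := fillingOfBetaCols_eq_some_false_iff.1 h
    omega
  · have hvm : v i - 1 < m := by have := (mem_betaVectors_iff.1 hv).1 i; have := hlam i; omega
    have hβ : fillingOfBetaCols lam v i ⟨v i - 1, hvm⟩ = some false :=
      fillingOfBetaCols_eq_some_false_iff.2 (Nat.sub_add_cancel (Nat.pos_of_ne_zero h0))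
    rw [IsCatalanFilling.betaCol_eq_of_eq_some_false (isCatalanFilling_fillingOfBetaCols hv hlam) hβ]
    exact Nat.sub_add_cancel (Nat.pos_of_ne_zero h0)

lemma card_catalanFillings_eq_card_betaVectors (hlam : ∀ i, lam i ≤ m) :
    (univ.filter (IsCatalanFilling (m := m) lam)).card = (betaVectors lam).card := by
  refine card_nbij' betaCol (fillingOfBetaCols lam) (fun f hf => ?_) (fun v hv => ?_)
    (fun f hf => ?_) (fun v hv => betaCol_fillingOfBetaCols hv hlam)
  · have hf : IsCatalanFilling lam f := (mem_filter.1 hf).2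
    exact mem_betaVectors_iff.2 ⟨fun i => hf.betaCol_le, fun i j hij => hf.betaCol_notMem_Ioc hij⟩
  · exact mem_filter.2 ⟨mem_univ _, isCatalanFilling_fillingOfBetaCols hv hlam⟩
  · exact IsCatalanFilling.fillingOfBetaCols_betaCol (mem_filter.1 hf).2

end BetaColumns

lemma card_union_Ioc_strictAntiOn (T : Finset ℕ) (a : ℕ) :
    StrictAntiOn (fun b => (T ∪ Ioc b a).card) {b | b ≤ a ∧ b ∉ T} := by
  rintro b - b' ⟨hb'a, hb'T⟩ hbb'
  refine card_lt_card (ssubset_iff_of_subset ?_ |>.2 ⟨b', ?_, ?_⟩)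
  · exact union_subset_union_right (Ioc_subset_Ioc_left hbb'.le)
  · simp [hbb', hb'a]
  · simp [hb'T]

lemma exists_card_union_Ioc_eq {T : Finset ℕ} {a c : ℕ} (hT : T ⊆ Icc 1 a)
    (hTc : T.card ≤ c) (hca : c ≤ a) :
    ∃ b ≤ a, b ∉ T ∧ (T ∪ Ioc b a).card = c := by
  set g := fun b => (T ∪ Ioc b a).card
  have hmaps : Set.MapsTo g ↑(range (a + 1) \ T) ↑(Icc T.card a) := fun b _ => by
    have : T ∪ Ioc b a ⊆ Icc 1 a := union_subset hT fun x hx => by simp at hx ⊢; omega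
    simpa [g] using ⟨card_le_card subset_union_left, (card_le_card this).trans (by simp)⟩
  have hinj : Set.InjOn g ↑(range (a + 1) \ T) :=
    (card_union_Ioc_strictAntiOn T a).injOn.mono fun b hb => by
      simp only [coe_sdiff, coe_range, Set.mem_sdiff, Set.mem_Iio] at hb
      exact ⟨by omega, hb.2⟩
  have hcard : (Icc T.card a).card ≤ (range (a + 1) \ T).card := by
    rw [card_sdiff_of_subset (hT.trans fun x hx => by simp at hx ⊢; omega)]
    simp
  obtain ⟨b, hb, hbc⟩ := surjOn_of_injOn_of_card_le g hmaps hinj hcard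
    (by simp [hTc, hca] : c ∈ Icc T.card a)
  simp only [coe_sdiff, coe_range, Set.mem_sdiff, Set.mem_Iio, mem_coe] at hb
  exact ⟨b, by omega, hb.2, hbc⟩

section CoverCounts

variable {k : ℕ}

def cover (lam v : Fin k → ℕ) : Finset ℕ :=
  univ.biUnion fun i => Ioc (v i) (lam i)

-- `coverCounts lam v i` is the size of the union of `(v j, lam j]` over the rows `j ≥ i`.
def coverCounts : {k : ℕ} → (Fin k → ℕ) → (Fin k → ℕ) → Fin k → ℕ
  | 0, _, _ => finZeroElim
  | _ + 1, lam, v => Fin.cons (cover lam v).card (coverCounts (Fin.tail lam) (Fin.tail v))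

def partitionsIn (lam : Fin k → ℕ) : Finset (Fin k → ℕ) :=
  (Fintype.piFinset fun i => range (lam i + 1)).filter fun C => ∀ i j, i ≤ j → C j ≤ C i

lemma cover_cons (a b : ℕ) (lam v : Fin k → ℕ) :
    cover (Fin.cons a lam : Fin (k + 1) → ℕ) (Fin.cons b v) = cover lam v ∪ Ioc b a := by
  ext x
  simp [cover, Fin.exists_fin_succ, or_comm]

lemma coverCounts_cons (a b : ℕ) (lam v : Fin k → ℕ) :
    coverCounts (Fin.cons a lam : Fin (k + 1) → ℕ) (Fin.cons b v)
      = Fin.cons (cover lam v ∪ Ioc b a).card (coverCounts lam v) := by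
  simp [coverCounts, cover_cons]

lemma cover_subset_Icc {lam : Fin k → ℕ} {a : ℕ} (h : ∀ i, lam i ≤ a) (v : Fin k → ℕ) :
    cover lam v ⊆ Icc 1 a := by
  intro x hx
  obtain ⟨i, -, hi⟩ := mem_biUnion.1 hx
  have := h i
  simp only [mem_Ioc, mem_Icc] at hi ⊢
  omega

lemma coverCounts_le_card_cover (lam v : Fin k → ℕ) (i : Fin k) :
    coverCounts lam v i ≤ (cover lam v).card := by
  induction k with
  | zero => exact i.elim0
  | succ k ih =>
    cases lam using Fin.consCases with | cons a lam =>
    cases v using Fin.consCases with | cons b v =>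
    rw [coverCounts_cons, cover_cons]
    cases i using Fin.cases with
    | zero => simp
    | succ i => simpa using (ih _ _ i).trans (card_le_card subset_union_left)

lemma card_cover_le_of_forall_coverCounts_le {lam v : Fin k → ℕ} {c : ℕ}
    (h : ∀ i, coverCounts lam v i ≤ c) : (cover lam v).card ≤ c := by
  cases k with
  | zero => simp [cover]
  | succ k => simpa [coverCounts] using h 0

lemma cons_mem_betaVectors_iff {a b : ℕ} {lam v : Fin k → ℕ} :
    (Fin.cons b v : Fin (k + 1) → ℕ) ∈ betaVectors (Fin.cons a lam)
      ↔ b ≤ a ∧ b ∉ cover lam v ∧ v ∈ betaVectors lam := by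
  simp only [betaVectors, cover, mem_filter, Fintype.mem_piFinset, Fin.forall_fin_succ,
    Fin.cons_zero, Fin.cons_succ, mem_range, Fin.succ_lt_succ_iff, Fin.succ_pos,
    Fin.not_lt_zero, mem_biUnion, mem_univ, true_and, Nat.lt_succ_iff, not_exists,
    false_implies, true_implies]
  tauto

lemma cons_mem_partitionsIn_iff {a c : ℕ} {lam C : Fin k → ℕ} :
    (Fin.cons c C : Fin (k + 1) → ℕ) ∈ partitionsIn (Fin.cons a lam)
      ↔ c ≤ a ∧ (∀ i, C i ≤ c) ∧ C ∈ partitionsIn lam := by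
  simp only [partitionsIn, mem_filter, Fintype.mem_piFinset, Fin.forall_fin_succ,
    Fin.cons_zero, Fin.cons_succ, mem_range, Fin.succ_le_succ_iff, Fin.zero_le, Nat.lt_succ_iff,
    nonpos_iff_eq_zero, Fin.succ_ne_zero, false_implies, true_implies, le_refl, true_and]
  tauto

lemma le_head_and_antitone_of_antitone_cons {a : ℕ} {lam : Fin k → ℕ}
    (h : Antitone (Fin.cons a lam : Fin (k + 1) → ℕ)) : (∀ i, lam i ≤ a) ∧ Antitone lam :=
  ⟨fun i => by simpa using h (Fin.zero_le i.succ),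
    fun i j hij => by simpa using h (Fin.succ_le_succ_iff.2 hij)⟩

lemma mapsTo_coverCounts {lam : Fin k → ℕ} (hlam : Antitone lam) :
    Set.MapsTo (coverCounts lam) (betaVectors lam) (partitionsIn lam) := by
  induction k with
  | zero => exact fun _ _ => mem_filter.2 ⟨Fintype.mem_piFinset.2 finZeroElim, finZeroElim⟩
  | succ k ih =>
    cases lam using Fin.consCases with | cons a lam =>
    intro v hv
    cases v using Fin.consCases with | cons b v =>
    obtain ⟨hba, -, hv⟩ := cons_mem_betaVectors_iff.1 hv
    obtain ⟨hle, hlam⟩ := le_head_and_antitone_of_antitone_cons hlam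
    rw [coverCounts_cons, mem_coe, cons_mem_partitionsIn_iff]
    refine ⟨?_, fun i => (coverCounts_le_card_cover _ _ i).trans (card_le_card subset_union_left),
      ih hlam hv⟩
    calc (cover lam v ∪ Ioc b a).card ≤ (Icc 1 a).card :=
          card_le_card (union_subset (cover_subset_Icc hle _) fun x hx => by simp at hx ⊢; omega)
      _ = a := by simp

lemma injOn_coverCounts (lam : Fin k → ℕ) :
    Set.InjOn (coverCounts lam) (betaVectors lam) := by
  induction k with
  | zero => intro v _ w _ _; exact Subsingleton.elim v w
  | succ k ih =>
    cases lam using Fin.consCases with | cons a lam =>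
    intro v hv w hw hvw
    cases v using Fin.consCases with | cons b v =>
    cases w using Fin.consCases with | cons c w =>
    obtain ⟨hba, hbv, hv⟩ := cons_mem_betaVectors_iff.1 hv
    obtain ⟨hca, hcw, hw⟩ := cons_mem_betaVectors_iff.1 hw
    rw [coverCounts_cons, coverCounts_cons, Fin.cons_inj] at hvw
    obtain rfl : v = w := ih lam hv hw hvw.2
    rw [(card_union_Ioc_strictAntiOn (cover lam v) a).injOn ⟨hba, hbv⟩ ⟨hca, hcw⟩ hvw.1]

lemma surjOn_coverCounts {lam : Fin k → ℕ} (hlam : Antitone lam) :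
    Set.SurjOn (coverCounts lam) (betaVectors lam) (partitionsIn lam) := by
  induction k with
  | zero =>
    exact fun C _ => ⟨C, mem_filter.2 ⟨Fintype.mem_piFinset.2 finZeroElim, finZeroElim⟩,
      Subsingleton.elim _ _⟩
  | succ k ih =>
    cases lam using Fin.consCases with | cons a lam =>
    intro C hC
    cases C using Fin.consCases with | cons c C =>
    obtain ⟨hca, hCc, hC⟩ := cons_mem_partitionsIn_iff.1 hC
    obtain ⟨hle, hlam⟩ := le_head_and_antitone_of_antitone_cons hlam
    obtain ⟨v, hv, rfl⟩ := ih hlam hC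
    obtain ⟨b, hba, hbv, hb⟩ := exists_card_union_Ioc_eq (cover_subset_Icc hle v)
      (card_cover_le_of_forall_coverCounts_le hCc) hca
    refine ⟨Fin.cons b v, cons_mem_betaVectors_iff.2 ⟨hba, hbv, hv⟩, ?_⟩
    rw [coverCounts_cons, hb]

lemma card_betaVectors_eq_card_partitionsIn {lam : Fin k → ℕ} (hlam : Antitone lam) :
    (betaVectors lam).card = (partitionsIn lam).card :=
  card_nbij _ (mapsTo_coverCounts hlam) (injOn_coverCounts lam) (surjOn_coverCounts hlam)

end CoverCounts

/-- The number of Catalan alternative tableaux of type `τ` equals the number of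
`k`-tuples `(C_1, …, C_k)` with `λ_i ≥ C_i` and `C_1 ≥ C_2 ≥ … ≥ C_k ≥ 0`,
i.e. the number of partitions with at most `k` parts contained in `λ(τ)`. -/
theorem stmt5 (n k : ℕ) (τ : Fin n → Bool) (hτ : onesCount τ = k)
    (lam : Fin k → ℕ) (hlam : ∀ i : Fin k, lam i = lambdaOf τ ((i : ℕ) + 1)) :
    (univ.filter fun f : Fin k → Fin (n - k) → Option Bool => IsCatalanFilling lam f).card
      = ((Fintype.piFinset fun i : Fin k => range (lam i + 1)).filter
          (fun C => ∀ i j : Fin k, i ≤ j → C j ≤ C i)).card := by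
  have hbound : ∀ i, lam i ≤ n - k := fun i => hτ ▸ hlam i ▸ lambdaOf_le_sub_onesCount τ _
  have hanti : Antitone lam := fun i j hij => by
    rw [hlam i, hlam j]
    exact lambdaOf_antitone τ (Nat.add_le_add_right hij 1)
  rw [card_catalanFillings_eq_card_betaVectors hbound]
  exact card_betaVectors_eq_card_partitionsIn hanti
end
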